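/- arXiv:0812.4535 — 6 statements merged into one kernel-verified Lean document; each statement's English description precedes it below -/
import Mathlib

section
/- Let n(t) = (z₀(t), z₁(t), z₂(t)) be a differentiable curve in ℂ³ whose values are null vectors (nonzero, with |z₁(t)|² + |z₂(t)|² = |z₀(t)|² for all t), and set w(t) = (z₁(t)/z₀(t), z₂(t)/z₀(t)) ∈ S³ ⊂ ℂ². Then for every t, Re(−i(z̄₁ z₁′ + z̄₂ z₂′ − z̄₀ z₀′)) = |z₀|² · Re(−i(w̄₁ w₁′ + w̄₂ w₂′)), where ′ denotes the derivative at t. -/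
/-!
By the quotient rule, `w̄ₖ wₖ' = z̄ₖ (zₖ' z₀ - zₖ z₀') / (z̄₀ z₀²)`, so
`|z₀|² w̄ₖ wₖ' = z̄ₖ zₖ' - |zₖ|² z₀' / z₀`. Summing over `k = 1, 2` and using the null condition
`|z₁|² + |z₂|² = |z₀|²` turns the correction term into `z̄₀ z₀'`, so the identity already holds
for the complex Hermitian pairings, before taking `Re(−i ·)`. Where `z₀(t) = 0` the null condition
forces the whole vector to vanish and both sides are `0`.
-/

open ComplexConjugate

namespace Complex

theorem sq_norm_mul_conj_div_mul_div_sq {a₀ : ℂ} (h₀ : a₀ ≠ 0) (a b₀ b : ℂ) :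
    (‖a₀‖ ^ 2 : ℂ) * (conj (a / a₀) * ((b * a₀ - a * b₀) / a₀ ^ 2)) =
      conj a * b - ‖a‖ ^ 2 * b₀ / a₀ := by
  rw [← mul_conj', ← mul_conj', map_div₀]
  have : conj a₀ ≠ 0 := (map_ne_zero _).mpr h₀
  field_simp

theorem conj_mul_add_conj_mul_sub_conj_mul_eq_sq_norm_mul {a₀ a₁ a₂ : ℂ} (h₀ : a₀ ≠ 0)
    (hnull : ‖a₁‖ ^ 2 + ‖a₂‖ ^ 2 = ‖a₀‖ ^ 2) (b₀ b₁ b₂ : ℂ) :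
    conj a₁ * b₁ + conj a₂ * b₂ - conj a₀ * b₀ =
      ‖a₀‖ ^ 2 * (conj (a₁ / a₀) * ((b₁ * a₀ - a₁ * b₀) / a₀ ^ 2) +
        conj (a₂ / a₀) * ((b₂ * a₀ - a₂ * b₀) / a₀ ^ 2)) := by
  have hconj : conj a₀ * b₀ = (‖a₁‖ ^ 2 + ‖a₂‖ ^ 2 : ℂ) * b₀ / a₀ := by
    rw [← ofReal_pow, ← ofReal_pow, ← ofReal_add, hnull, ofReal_pow, ← mul_conj']
    field_simp
  rw [mul_add, sq_norm_mul_conj_div_mul_div_sq h₀, sq_norm_mul_conj_div_mul_div_sq h₀, hconj]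
  ring

end Complex

theorem contact_pairing_scales_general (z₀ z₁ z₂ : ℝ → ℂ)
    (hd₀ : Differentiable ℝ z₀) (hd₁ : Differentiable ℝ z₁)
    (hd₂ : Differentiable ℝ z₂)
    (hnull : ∀ t, ‖z₁ t‖ ^ 2 + ‖z₂ t‖ ^ 2 =
      ‖z₀ t‖ ^ 2) :
    ∀ t : ℝ,
      (-Complex.I * ((starRingEnd ℂ) (z₁ t) * deriv z₁ t +
          (starRingEnd ℂ) (z₂ t) * deriv z₂ t -
          (starRingEnd ℂ) (z₀ t) * deriv z₀ t)).re =
      ‖z₀ t‖ ^ 2 *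
        (-Complex.I * ((starRingEnd ℂ) (z₁ t / z₀ t) *
            deriv (fun s => z₁ s / z₀ s) t +
          (starRingEnd ℂ) (z₂ t / z₀ t) *
            deriv (fun s => z₂ s / z₀ s) t)).re := by
  intro t
  by_cases h₀ : z₀ t = 0
  · have hsum : ‖z₁ t‖ ^ 2 + ‖z₂ t‖ ^ 2 = 0 := by simpa [h₀] using hnull t
    obtain ⟨h₁, h₂⟩ := (add_eq_zero_iff_of_nonneg (by positivity) (by positivity)).mp hsum
    simp_all
  · rw [deriv_fun_div (hd₁ t) (hd₀ t) h₀, deriv_fun_div (hd₂ t) (hd₀ t) h₀,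
      ← Complex.re_ofReal_mul, Complex.ofReal_pow, mul_left_comm,
      ← Complex.conj_mul_add_conj_mul_sub_conj_mul_eq_sq_norm_mul h₀ (hnull t)]

/-- Let `n(t) = (z₀(t), z₁(t), z₂(t))` be a differentiable curve of null
vectors (nonzero, `|z₁|² + |z₂|² = |z₀|²`), and let
`w(t) = (z₁(t)/z₀(t), z₂(t)/z₀(t)) ∈ S³ ⊂ ℂ²`.  Then for every `t`,
`Re(−i(z̄₁z₁′ + z̄₂z₂′ − z̄₀z₀′)) = |z₀|² · Re(−i(w̄₁w₁′ + w̄₂w₂′))`,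
i.e. `⟨n′, i n⟩ = |z₀|² ⟨w′, i w⟩`. -/
theorem contact_pairing_scales (z₀ z₁ z₂ : ℝ → ℂ)
    (hd₀ : Differentiable ℝ z₀) (hd₁ : Differentiable ℝ z₁)
    (hd₂ : Differentiable ℝ z₂)
    (hnz : ∀ t, (z₀ t, z₁ t, z₂ t) ≠ (0, 0, 0))
    (hnull : ∀ t, ‖z₁ t‖ ^ 2 + ‖z₂ t‖ ^ 2 =
      ‖z₀ t‖ ^ 2) :
    ∀ t : ℝ,
      (-Complex.I * ((starRingEnd ℂ) (z₁ t) * deriv z₁ t +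
          (starRingEnd ℂ) (z₂ t) * deriv z₂ t -
          (starRingEnd ℂ) (z₀ t) * deriv z₀ t)).re =
      ‖z₀ t‖ ^ 2 *
        (-Complex.I * ((starRingEnd ℂ) (z₁ t / z₀ t) *
            deriv (fun s => z₁ s / z₀ s) t +
          (starRingEnd ℂ) (z₂ t / z₀ t) *
            deriv (fun s => z₂ s / z₀ s) t)).re :=
  contact_pairing_scales_general z₀ z₁ z₂ hd₀ hd₁ hd₂ hnull
end

section
/- (Lemma characterizing contact curves.) Let n(t) = (z₀(t), z₁(t), z₂(t)) be a differentiable curve in ℂ³ whose values are null vectors (nonzero, with |z₁(t)|² + |z₂(t)|² = |z₀(t)|²), and set w(t) = (z₁(t)/z₀(t), z₂(t)/z₀(t)) ∈ S³ ⊂ ℂ². Then for every t, ⟨n′(t), i·n(t)⟩ = 0 if and only if ⟨w′(t), i·w(t)⟩ = 0; that is, the projectivized curve in the null cone satisfies the lifted contact condition if and only if the corresponding curve in S³ satisfies the standard contact condition (its tangent is orthogonal to the Hopf fibre direction i·w). -/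
/-! Writing `w_k = z_k / z₀`, the quotient rule gives
`Σ w̄_k w_k' = (Σ z̄_k z_k' − (Σ |z_k|²) z₀'/z₀) / |z₀|²`, and nullity replaces `Σ |z_k|²`
by `|z₀|²`, so `Σ w̄_k w_k' = (z̄₁z₁' + z̄₂z₂' − z̄₀z₀') / |z₀|²`. The two pairings thus differ by
a positive real factor, and `Re(−i ·) = Im` vanishes on one iff on the other. Where `z₀(t) = 0`
nullity kills the whole vector and both sides vanish (with Lean's `x / 0 = 0`). -/

open Complex ComplexConjugate

theorem conj_div_mul_quotient_deriv_add_of_null {a b c a' b' c' : ℂ} (ha : a ≠ 0)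
    (hnull : conj b * b + conj c * c = conj a * a) :
    conj (b / a) * ((b' * a - b * a') / a ^ 2) + conj (c / a) * ((c' * a - c * a') / a ^ 2) =
      (conj b * b' + conj c * c' - conj a * a') / (‖a‖ ^ 2 : ℝ) := by
  have ha' : conj a ≠ 0 := (map_ne_zero _).2 ha
  rw [ofReal_pow, ← conj_mul', map_div₀, map_div₀]
  field_simp
  linear_combination (-a') * hnull

theorem im_div_ofReal_eq_zero_iff {x : ℂ} {r : ℝ} (hr : r ≠ 0) :
    (x / r).im = 0 ↔ x.im = 0 := by
  rw [div_ofReal_im, div_eq_zero_iff, or_iff_left hr]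

theorem contact_curve_characterization_general (z₀ z₁ z₂ : ℝ → ℂ)
    (hd₀ : Differentiable ℝ z₀) (hd₁ : Differentiable ℝ z₁)
    (hd₂ : Differentiable ℝ z₂)
    (hnull : ∀ t, ‖z₁ t‖ ^ 2 + ‖z₂ t‖ ^ 2 =
      ‖z₀ t‖ ^ 2) :
    ∀ t : ℝ,
      (-Complex.I * ((starRingEnd ℂ) (z₁ t) * deriv z₁ t +
          (starRingEnd ℂ) (z₂ t) * deriv z₂ t -
          (starRingEnd ℂ) (z₀ t) * deriv z₀ t)).re = 0 ↔
      (-Complex.I * ((starRingEnd ℂ) (z₁ t / z₀ t) *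
            deriv (fun s => z₁ s / z₀ s) t +
          (starRingEnd ℂ) (z₂ t / z₀ t) *
            deriv (fun s => z₂ s / z₀ s) t)).re = 0 := by
  intro t
  by_cases h₀ : z₀ t = 0
  · have hsum : ‖z₁ t‖ ^ 2 + ‖z₂ t‖ ^ 2 = 0 := by simpa [h₀] using hnull t
    obtain ⟨h₁, h₂⟩ := (add_eq_zero_iff_of_nonneg (by positivity) (by positivity)).1 hsum
    simp_all
  · have hnullC : conj (z₁ t) * z₁ t + conj (z₂ t) * z₂ t = conj (z₀ t) * z₀ t := by
      simp only [conj_mul']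
      exact_mod_cast hnull t
    rw [deriv_fun_div (hd₁ t) (hd₀ t) h₀, deriv_fun_div (hd₂ t) (hd₀ t) h₀,
      conj_div_mul_quotient_deriv_add_of_null h₀ hnullC]
    simp only [neg_mul, neg_re, I_mul_re, neg_neg]
    exact (im_div_ofReal_eq_zero_iff (by positivity)).symm

/-- Lemma characterizing contact curves: for a differentiable curve
`n(t) = (z₀(t), z₁(t), z₂(t))` of null vectors (nonzero,
`|z₁|² + |z₂|² = |z₀|²`) with projection
`w(t) = (z₁(t)/z₀(t), z₂(t)/z₀(t)) ∈ S³ ⊂ ℂ²`, one has, at every `t`,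
`⟨n′(t), i·n(t)⟩ = 0` iff `⟨w′(t), i·w(t)⟩ = 0`; i.e. the lifted contact
condition `Re(−i(z̄₁z₁′ + z̄₂z₂′ − z̄₀z₀′)) = 0` holds iff the curve in `S³`
satisfies the standard contact condition `Re(−i(w̄₁w₁′ + w̄₂w₂′)) = 0`. -/
theorem contact_curve_characterization (z₀ z₁ z₂ : ℝ → ℂ)
    (hd₀ : Differentiable ℝ z₀) (hd₁ : Differentiable ℝ z₁)
    (hd₂ : Differentiable ℝ z₂)
    (hnz : ∀ t, (z₀ t, z₁ t, z₂ t) ≠ (0, 0, 0))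
    (hnull : ∀ t, ‖z₁ t‖ ^ 2 + ‖z₂ t‖ ^ 2 =
      ‖z₀ t‖ ^ 2) :
    ∀ t : ℝ,
      (-Complex.I * ((starRingEnd ℂ) (z₁ t) * deriv z₁ t +
          (starRingEnd ℂ) (z₂ t) * deriv z₂ t -
          (starRingEnd ℂ) (z₀ t) * deriv z₀ t)).re = 0 ↔
      (-Complex.I * ((starRingEnd ℂ) (z₁ t / z₀ t) *
            deriv (fun s => z₁ s / z₀ s) t +
          (starRingEnd ℂ) (z₂ t / z₀ t) *
            deriv (fun s => z₂ s / z₀ s) t)).re = 0 :=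
  contact_curve_characterization_general z₀ z₁ z₂ hd₀ hd₁ hd₂ hnull
end

section
/- (Independence of the contact condition from the choice of lift.) Let n : I → ℂ³ be a differentiable curve with ⟨n(t), n(t)⟩_ℂ = 0 for all t, let λ : I → ℂ be a differentiable nonvanishing function, and set m(t) = λ(t)·n(t). Then for every t, ⟨m′(t), i·m(t)⟩ = |λ(t)|² · ⟨n′(t), i·n(t)⟩. In particular ⟨m′(t), i·m(t)⟩ = 0 if and only if ⟨n′(t), i·n(t)⟩ = 0, so the condition ⟨n′, i n⟩ = 0 depends only on the projectivized curve and not on the choice of lift into the null cone. -/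
/-!
Differentiating `m = λ n` componentwise gives `m̄ₖ mₖ′ = |λ|² n̄ₖ nₖ′ + λ̄ λ′ |nₖ|²`. Summed with
the signs of the form, the second terms add up to `λ̄ λ′ ⟨n, n⟩_ℂ`, which vanishes on the null
cone, so the complex expression inside `⟨m′, i m⟩` is `|λ|²` times the one inside `⟨n′, i n⟩`;
as `|λ|²` is real it passes through `Re`.
-/

open Complex ComplexConjugate

lemma conj_mul_deriv_mul {f g : ℝ → ℂ} {t : ℝ} (hf : DifferentiableAt ℝ f t)
    (hg : DifferentiableAt ℝ g t) :
    conj (f t * g t) * deriv (fun s => f s * g s) t =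
      (‖f t‖ : ℂ) ^ 2 * (conj (g t) * deriv g t) + conj (f t) * deriv f t * (g t * conj (g t)) := by
  rw [deriv_fun_mul hf hg, map_mul, ← conj_mul' (f t)]
  ring

/-- The complex number whose real part is `⟨n′(t), i n(t)⟩` for `n = (n₀, n₁, n₂)`. -/
noncomputable def contactTerm (n₀ n₁ n₂ : ℝ → ℂ) (t : ℝ) : ℂ :=
  -I * (conj (n₁ t) * deriv n₁ t + conj (n₂ t) * deriv n₂ t - conj (n₀ t) * deriv n₀ t)

lemma contactTerm_mul_of_null {n₀ n₁ n₂ lam : ℝ → ℂ} {t : ℝ} (hd₀ : DifferentiableAt ℝ n₀ t)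
    (hd₁ : DifferentiableAt ℝ n₁ t) (hd₂ : DifferentiableAt ℝ n₂ t)
    (hdl : DifferentiableAt ℝ lam t)
    (hnull : -(n₀ t * conj (n₀ t)) + n₁ t * conj (n₁ t) + n₂ t * conj (n₂ t) = 0) :
    contactTerm (fun s => lam s * n₀ s) (fun s => lam s * n₁ s) (fun s => lam s * n₂ s) t =
      (‖lam t‖ : ℂ) ^ 2 * contactTerm n₀ n₁ n₂ t := by
  unfold contactTerm
  rw [conj_mul_deriv_mul hdl hd₀, conj_mul_deriv_mul hdl hd₁, conj_mul_deriv_mul hdl hd₂]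
  linear_combination -I * conj (lam t) * deriv lam t * hnull

lemma re_contactTerm_mul_of_null {n₀ n₁ n₂ lam : ℝ → ℂ} {t : ℝ} (hd₀ : DifferentiableAt ℝ n₀ t)
    (hd₁ : DifferentiableAt ℝ n₁ t) (hd₂ : DifferentiableAt ℝ n₂ t)
    (hdl : DifferentiableAt ℝ lam t)
    (hnull : -(n₀ t * conj (n₀ t)) + n₁ t * conj (n₁ t) + n₂ t * conj (n₂ t) = 0) :
    (contactTerm (fun s => lam s * n₀ s) (fun s => lam s * n₁ s) (fun s => lam s * n₂ s) t).re =
      ‖lam t‖ ^ 2 * (contactTerm n₀ n₁ n₂ t).re := by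
  rw [contactTerm_mul_of_null hd₀ hd₁ hd₂ hdl hnull, ← ofReal_pow, re_ofReal_mul]

/-- Independence of the contact condition from the choice of lift: if
`n(t) = (n₀(t), n₁(t), n₂(t))` is a differentiable curve in `ℂ³` with
`⟨n(t), n(t)⟩_ℂ = −n₀n̄₀ + n₁n̄₁ + n₂n̄₂ = 0` for all `t`, `lam : I → ℂ` is a
differentiable nonvanishing function, and `m(t) = lam(t)·n(t)`, then
`⟨m′(t), i·m(t)⟩ = |lam(t)|² ⟨n′(t), i·n(t)⟩`, where
`⟨n′, i n⟩ = Re(−i(n̄₁n₁′ + n̄₂n₂′ − n̄₀n₀′))`.  In particular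
`⟨m′, i m⟩ = 0 ↔ ⟨n′, i n⟩ = 0`, so the contact condition depends only on the
projectivized curve, not on the lift into the null cone. -/
theorem contact_condition_lift_independent (n₀ n₁ n₂ : ℝ → ℂ) (lam : ℝ → ℂ)
    (hd₀ : Differentiable ℝ n₀) (hd₁ : Differentiable ℝ n₁)
    (hd₂ : Differentiable ℝ n₂) (hdl : Differentiable ℝ lam)
    (hlam : ∀ t, lam t ≠ 0)
    (hnull : ∀ t, -(n₀ t * (starRingEnd ℂ) (n₀ t)) +
      n₁ t * (starRingEnd ℂ) (n₁ t) + n₂ t * (starRingEnd ℂ) (n₂ t) = 0) :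
    ∀ t : ℝ,
      ((-Complex.I * ((starRingEnd ℂ) (lam t * n₁ t) *
            deriv (fun s => lam s * n₁ s) t +
          (starRingEnd ℂ) (lam t * n₂ t) * deriv (fun s => lam s * n₂ s) t -
          (starRingEnd ℂ) (lam t * n₀ t) *
            deriv (fun s => lam s * n₀ s) t)).re =
        ‖lam t‖ ^ 2 *
          (-Complex.I * ((starRingEnd ℂ) (n₁ t) * deriv n₁ t +
            (starRingEnd ℂ) (n₂ t) * deriv n₂ t -
            (starRingEnd ℂ) (n₀ t) * deriv n₀ t)).re) ∧
      ((-Complex.I * ((starRingEnd ℂ) (lam t * n₁ t) *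
            deriv (fun s => lam s * n₁ s) t +
          (starRingEnd ℂ) (lam t * n₂ t) * deriv (fun s => lam s * n₂ s) t -
          (starRingEnd ℂ) (lam t * n₀ t) *
            deriv (fun s => lam s * n₀ s) t)).re = 0 ↔
        (-Complex.I * ((starRingEnd ℂ) (n₁ t) * deriv n₁ t +
          (starRingEnd ℂ) (n₂ t) * deriv n₂ t -
          (starRingEnd ℂ) (n₀ t) * deriv n₀ t)).re = 0) := by
  intro t
  have hscale := re_contactTerm_mul_of_null (hd₀ t) (hd₁ t) (hd₂ t) (hdl t) (hnull t)
  have hnorm : ‖lam t‖ ^ 2 ≠ 0 := pow_ne_zero 2 (norm_ne_zero_iff.mpr (hlam t))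
  exact ⟨hscale, hscale ▸ mul_eq_zero_iff_left hnorm⟩
end

section
/- Let V be a 2-dimensional real inner product space with orthonormal basis (e₁, e₂), and let A : V → V be the self-adjoint linear map with A e₁ = λ e₁ and A e₂ = ν e₂. Fix r > 0, φ ∈ ℝ, α = (2/r)·sin φ, and assume λν = ((λ+ν)/2)·α − 1/r². Then the vectors v⁺ = cos φ · e₁ + (rλ − sin φ) · e₂ and v⁻ = −cos φ · e₁ + (rλ − sin φ) · e₂ are null for the quadratic form of A − (α/2)·I, i.e. ⟨(A − (α/2)·I) v⁺, v⁺⟩ = 0 and ⟨(A − (α/2)·I) v⁻, v⁻⟩ = 0. -/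
/-!
In the orthonormal eigenbasis the quadratic form of `A - (α/2)·I` at `a e₁ + b e₂` is
`(λ - α/2) a² + (ν - α/2) b²`. For `a = ±cos φ`, `b = rλ - sin φ` and `α/2 = sin φ / r`,
`r` times this value factors as `(rλ - sin φ) (1 + r² λν - r sin φ (λ + ν))`, and the second
factor vanishes by the relation between `λ`, `ν` and `α`.
-/

open RealInnerProductSpace

section EigenQuadraticForm

variable {V : Type*} [NormedAddCommGroup V] [InnerProductSpace ℝ V]

theorem LinearMap.sub_smul_id_apply_of_apply_eq_smul {A : V →ₗ[ℝ] V} {x : V} {μ : ℝ}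
    (hx : A x = μ • x) (c : ℝ) : (A - c • (LinearMap.id : V →ₗ[ℝ] V)) x = (μ - c) • x := by
  rw [LinearMap.sub_apply, LinearMap.smul_apply, LinearMap.id_apply, hx, sub_smul]

theorem inner_apply_add_of_orthonormal_eigenvectors {e₁ e₂ : V} (he₁ : ‖e₁‖ = 1)
    (he₂ : ‖e₂‖ = 1) (he₁₂ : ⟪e₁, e₂⟫ = 0) {B : V →ₗ[ℝ] V} {μ₁ μ₂ : ℝ}
    (hBe₁ : B e₁ = μ₁ • e₁) (hBe₂ : B e₂ = μ₂ • e₂) (a b : ℝ) :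
    ⟪B (a • e₁ + b • e₂), a • e₁ + b • e₂⟫ = μ₁ * a ^ 2 + μ₂ * b ^ 2 := by
  have h₁₁ : ⟪e₁, e₁⟫ = 1 := by rw [real_inner_self_eq_norm_sq, he₁, one_pow]
  have h₂₂ : ⟪e₂, e₂⟫ = 1 := by rw [real_inner_self_eq_norm_sq, he₂, one_pow]
  have h₂₁ : ⟪e₂, e₁⟫ = 0 := by rw [real_inner_comm, he₁₂]
  simp only [map_add, map_smul, hBe₁, hBe₂, inner_add_left, inner_add_right,
    real_inner_smul_left, real_inner_smul_right, h₁₁, h₂₂, he₁₂, h₂₁]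
  ring

end EigenQuadraticForm

theorem characteristic_quadratic_eq_zero {r s l v a : ℝ} (hr : r ≠ 0) (has : a ^ 2 + s ^ 2 = 1)
    (hlv : l * v = ((l + v) / 2) * ((2 / r) * s) - 1 / r ^ 2) :
    (l - (2 / r * s) / 2) * a ^ 2 + (v - (2 / r * s) / 2) * (r * l - s) ^ 2 = 0 := by
  have hlv' : r ^ 2 * (l * v) = r * s * (l + v) - 1 := by
    rw [hlv]; field_simp
  field_simp
  linear_combination (r * l - s) * (hlv' + has)

theorem characteristic_vectors_null_general {V : Type*} [NormedAddCommGroup V]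
    [InnerProductSpace ℝ V]
    (e₁ e₂ : V) (he₁ : ‖e₁‖ = 1) (he₂ : ‖e₂‖ = 1) (he₁₂ : ⟪e₁, e₂⟫ = 0)
    (A : V →ₗ[ℝ] V)
    (r φ l v : ℝ) (hr : 0 < r)
    (hAe₁ : A e₁ = l • e₁) (hAe₂ : A e₂ = v • e₂)
    (hlv : l * v = ((l + v) / 2) * ((2 / r) * Real.sin φ) - 1 / r ^ 2) :
    ⟪(A - (((2 / r) * Real.sin φ) / 2) • (LinearMap.id : V →ₗ[ℝ] V))
        (Real.cos φ • e₁ + (r * l - Real.sin φ) • e₂),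
      Real.cos φ • e₁ + (r * l - Real.sin φ) • e₂⟫ = 0 ∧
    ⟪(A - (((2 / r) * Real.sin φ) / 2) • (LinearMap.id : V →ₗ[ℝ] V))
        ((-Real.cos φ) • e₁ + (r * l - Real.sin φ) • e₂),
      (-Real.cos φ) • e₁ + (r * l - Real.sin φ) • e₂⟫ = 0 := by
  set c := ((2 / r) * Real.sin φ) / 2
  have hquad := inner_apply_add_of_orthonormal_eigenvectors he₁ he₂ he₁₂
    (LinearMap.sub_smul_id_apply_of_apply_eq_smul hAe₁ c)
    (LinearMap.sub_smul_id_apply_of_apply_eq_smul hAe₂ c)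
  have hnull := fun a (ha : a ^ 2 + Real.sin φ ^ 2 = 1) =>
    characteristic_quadratic_eq_zero hr.ne' ha hlv
  constructor
  · rw [hquad]; exact hnull _ (Real.cos_sq_add_sin_sq φ)
  · rw [hquad]; exact hnull _ (by rw [neg_sq, Real.cos_sq_add_sin_sq])

/-- Let `V` be a 2-dimensional real inner product space with orthonormal basis
`(e₁, e₂)`, and `A : V → V` the self-adjoint linear map with `A e₁ = λ e₁`,
`A e₂ = ν e₂`.  Fix `r > 0`, `φ ∈ ℝ`, `α = (2/r)·sin φ`, and assume
`λν = ((λ+ν)/2)·α − 1/r²`.  Then `v⁺ = cos φ · e₁ + (rλ − sin φ) · e₂` and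
`v⁻ = −cos φ · e₁ + (rλ − sin φ) · e₂` are null for the quadratic form of
`A − (α/2)·I`. -/
theorem characteristic_vectors_null {V : Type*} [NormedAddCommGroup V]
    [InnerProductSpace ℝ V] [FiniteDimensional ℝ V]
    (hdim : Module.finrank ℝ V = 2)
    (e₁ e₂ : V) (he₁ : ‖e₁‖ = 1) (he₂ : ‖e₂‖ = 1) (he₁₂ : ⟪e₁, e₂⟫ = 0)
    (A : V →ₗ[ℝ] V) (hA : A.IsSymmetric)
    (r φ l v : ℝ) (hr : 0 < r)
    (hAe₁ : A e₁ = l • e₁) (hAe₂ : A e₂ = v • e₂)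
    (hlv : l * v = ((l + v) / 2) * ((2 / r) * Real.sin φ) - 1 / r ^ 2) :
    ⟪(A - (((2 / r) * Real.sin φ) / 2) • (LinearMap.id : V →ₗ[ℝ] V))
        (Real.cos φ • e₁ + (r * l - Real.sin φ) • e₂),
      Real.cos φ • e₁ + (r * l - Real.sin φ) • e₂⟫ = 0 ∧
    ⟪(A - (((2 / r) * Real.sin φ) / 2) • (LinearMap.id : V →ₗ[ℝ] V))
        ((-Real.cos φ) • e₁ + (r * l - Real.sin φ) • e₂),
      (-Real.cos φ) • e₁ + (r * l - Real.sin φ) • e₂⟫ = 0 :=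
  characteristic_vectors_null_general e₁ e₂ he₁ he₂ he₁₂ A r φ l v hr hAe₁ hAe₂ hlv
end

section
/- Fix r > 0 and φ ∈ ℝ, put α = (2/r)·sin φ, and suppose real numbers λ, ν satisfy λν = ((λ+ν)/2)·α − 1/r². Then (rλ − sin φ)(rν − sin φ) = −cos²φ. Consequently the vectors (cos φ, rλ − sin φ) and (−(rν − sin φ), cos φ) in ℝ² are linearly dependent; i.e., the characteristic direction v⁺ is well defined up to a nonzero scalar factor, independently of which principal vector is chosen as e₁. -/
/-- Fix `r > 0`, `φ ∈ ℝ`, `α = (2/r)·sin φ`, and suppose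
`λν = ((λ+ν)/2)·α − 1/r²`.  Then `(rλ − sin φ)(rν − sin φ) = −cos²φ`, and
consequently the vectors `(cos φ, rλ − sin φ)` and `(−(rν − sin φ), cos φ)` in
`ℝ²` are linearly dependent: the characteristic direction is well defined up
to a nonzero scalar, independently of which principal vector is chosen as
`e₁`. -/
theorem characteristic_direction_well_defined (r φ l v : ℝ) (hr : 0 < r)
    (hlv : l * v = ((l + v) / 2) * ((2 / r) * Real.sin φ) - 1 / r ^ 2) :
    (r * l - Real.sin φ) * (r * v - Real.sin φ) = -(Real.cos φ) ^ 2 ∧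
    ¬ LinearIndependent ℝ
      ![((Real.cos φ, r * l - Real.sin φ) : ℝ × ℝ),
        (-(r * v - Real.sin φ), Real.cos φ)] := by
  have hr0 : r ≠ 0 := ne_of_gt hr
  have hpy : Real.sin φ ^ 2 + Real.cos φ ^ 2 = 1 := Real.sin_sq_add_cos_sq φ
  have h2 : r ^ 2 * (l * v) = r * Real.sin φ * (l + v) - 1 := by
    rw [hlv]; field_simp
  have key : (r * l - Real.sin φ) * (r * v - Real.sin φ) = -(Real.cos φ) ^ 2 := by
    linear_combination h2 + hpy
  refine ⟨key, ?_⟩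
  rw [LinearIndependent.pair_iff]
  push_neg
  set c := Real.cos φ
  set a := r * l - Real.sin φ
  set b := r * v - Real.sin φ
  by_cases hbc : b = 0 ∧ c = 0
  · exact ⟨0, 1, by simp [hbc.1, hbc.2, Prod.ext_iff], by simp⟩
  · refine ⟨b, c, ?_, fun hb hc => hbc ⟨hb, hc⟩⟩
    simp only [Prod.smul_mk, smul_eq_mul, Prod.mk_add_mk, Prod.mk_eq_zero]
    constructor
    · ring
    · linear_combination key
end

section
/- Let V be a real vector space and let a, b, x, y ∈ V, viewed as degree-one elements ι(a), ι(b), ι(x), ι(y) of the exterior algebra Λ(V). Fix r ≠ 0 and s, k ∈ ℝ with s² + k² = 1 and k ≠ 0. Then the following two conditions are equivalent: (i) ι(a)∧ι(x) + ι(b)∧ι(y) = 0 and 2 ι(a)∧ι(b) + (2s/r)(ι(b)∧ι(x) − ι(a)∧ι(y)) + (2/r²) ι(x)∧ι(y) = 0; (ii) both products (ι(a) − (1/r)(s·ι(x) + k·ι(y))) ∧ (ι(b) − (1/r)(s·ι(y) − k·ι(x))) = 0 and (ι(a) − (1/r)(s·ι(x) − k·ι(y))) ∧ (ι(b) − (1/r)(s·ι(y)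 + k·ι(x))) = 0. -/
open ExteriorAlgebra

/-- The algebraic identity underlying equations (3.19)–(3.21) of the paper:
for `a, b, x, y` in a real vector space `V`, viewed as degree-one elements of
the exterior algebra `Λ(V)`, and reals `r ≠ 0`, `s² + k² = 1`, `k ≠ 0`, the
pair of equations
`ι(a)∧ι(x) + ι(b)∧ι(y) = 0` and
`2ι(a)∧ι(b) + (2s/r)(ι(b)∧ι(x) − ι(a)∧ι(y)) + (2/r²)ι(x)∧ι(y) = 0`
is equivalent to the pair of decomposability equations
`(ι(a) − (1/r)(s ι(x) + k ι(y))) ∧ (ι(b) − (1/r)(s ι(y) − k ι(x))) = 0` and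
`(ι(a) − (1/r)(s ι(x) − k ι(y))) ∧ (ι(b) − (1/r)(s ι(y) + k ι(x))) = 0`. -/
theorem structure_equations_recombined {V : Type*} [AddCommGroup V]
    [Module ℝ V] (a b x y : V) (r s k : ℝ)
    (hr : r ≠ 0) (hsk : s ^ 2 + k ^ 2 = 1) (hk : k ≠ 0) :
    (ι ℝ a * ι ℝ x + ι ℝ b * ι ℝ y = 0 ∧
      (2 : ℝ) • (ι ℝ a * ι ℝ b) +
        (2 * s / r) • (ι ℝ b * ι ℝ x - ι ℝ a * ι ℝ y) +
        (2 / r ^ 2) • (ι ℝ x * ι ℝ y) = 0)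
    ↔
    ((ι ℝ a - (1 / r) • (s • ι ℝ x + k • ι ℝ y)) *
        (ι ℝ b - (1 / r) • (s • ι ℝ y - k • ι ℝ x)) = 0 ∧
      (ι ℝ a - (1 / r) • (s • ι ℝ x - k • ι ℝ y)) *
        (ι ℝ b - (1 / r) • (s • ι ℝ y + k • ι ℝ x)) = 0) := by
  have sq : ∀ v : V, ι ℝ v * ι ℝ v = 0 := fun v => ι_sq_zero v
  have sw : ∀ u v : V, ι ℝ v * ι ℝ u = -(ι ℝ u * ι ℝ v) := fun u v =>
    eq_neg_of_add_eq_zero_right (ι_add_mul_swap u v)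
  set E1 := ι ℝ a * ι ℝ x + ι ℝ b * ι ℝ y with hE1
  set E2 := (2 : ℝ) • (ι ℝ a * ι ℝ b) +
        (2 * s / r) • (ι ℝ b * ι ℝ x - ι ℝ a * ι ℝ y) +
        (2 / r ^ 2) • (ι ℝ x * ι ℝ y) with hE2
  set P1 := (ι ℝ a - (1 / r) • (s • ι ℝ x + k • ι ℝ y)) *
        (ι ℝ b - (1 / r) • (s • ι ℝ y - k • ι ℝ x)) with hP1
  set P2 := (ι ℝ a - (1 / r) • (s • ι ℝ x - k • ι ℝ y)) *
        (ι ℝ b - (1 / r) • (s • ι ℝ y + k • ι ℝ x)) with hP2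
  have h1 : P1 = (1/2 : ℝ) • E2 + (k/r) • E1 := by
    rw [hP1, hE1, hE2]
    simp only [sub_mul, mul_sub, add_mul, mul_add, smul_mul_assoc, mul_smul_comm,
      smul_add, smul_sub, smul_smul, sq, sw x a, sw y a, sw x b, sw y b, sw y x,
      smul_neg, smul_zero, mul_zero, zero_mul]
    match_scalars <;> try ring1
    all_goals linear_combination (-r⁻¹ ^ 2 : ℝ) * hsk
  have h2 : P2 = (1/2 : ℝ) • E2 - (k/r) • E1 := by
    rw [hP2, hE1, hE2]
    simp only [sub_mul, mul_sub, add_mul, mul_add, smul_mul_assoc, mul_smul_comm,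
      smul_add, smul_sub, smul_smul, sq, sw x a, sw y a, sw x b, sw y b, sw y x,
      smul_neg, smul_zero, mul_zero, zero_mul]
    match_scalars <;> try ring1
    all_goals linear_combination (-r⁻¹ ^ 2 : ℝ) * hsk
  constructor
  · rintro ⟨e1, e2⟩
    rw [h1, h2, e1, e2]
    simp
  · rintro ⟨p1, p2⟩
    have hk' : (k / r : ℝ) ≠ 0 := div_ne_zero hk hr
    have hE2' : E2 = P1 + P2 := by
      rw [h1, h2]; module
    have hE1' : (2 * (k / r)) • E1 = P1 - P2 := by
      rw [h1, h2]; module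
    constructor
    · have : (2 * (k / r)) • E1 = 0 := by rw [hE1', p1, p2, sub_zero]
      have h2k : (2 * (k / r) : ℝ) ≠ 0 := by positivity
      exact (smul_eq_zero.mp this).resolve_left h2k
    · rw [hE2', p1, p2, add_zero]
end
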